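/- arXiv:2303.11231 — 2 statements merged into one kernel-verified Lean document; each statement's English description precedes it below -/
import Mathlib

section
/- Let C be a class of graphs with polynomial χ-bounding function f(x) = x^c. If P is a C-right-module-partition of G such that (G, P) is d-almost mixed free, then χ(G) ≤ ω(G)^{cd}. -/
/-- An ordered graph is a graph on `Fin n` with the natural vertex order.
`part : Fin n → Fin k` is a right module partition of `G` if its parts are
consecutive intervals (`part` is monotone and surjective), each part is an
independent set, and for `i < j` the part `V_i` is a module in `G[V_i ∪ V_j]`. -/
def IsRMP {n k : ℕ} (G : SimpleGraph (Fin n)) (part : Fin n → Fin k) : Prop :=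
  Monotone part ∧ Function.Surjective part ∧
  (∀ x y, part x = part y → ¬ G.Adj x y) ∧
  (∀ u u' w, part u = part u' → part u < part w → (G.Adj u w ↔ G.Adj u' w))

/-- `Q` is a transversal minor of `(G, part)`: choose nonempty subsets
`W a ⊆ V_{j a}` for a strictly increasing selection `j` of parts; `Q` records
the existence of edges between the chosen subsets. -/
def IsTransversalMinor {n k ℓ : ℕ} (G : SimpleGraph (Fin n))
    (part : Fin n → Fin k) (Q : SimpleGraph (Fin ℓ)) : Prop :=
  ∃ (j : Fin ℓ → Fin k) (W : Fin ℓ → Finset (Fin n)),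
    StrictMono j ∧ (∀ a, (W a).Nonempty) ∧ (∀ a, ∀ v ∈ W a, part v = j a) ∧
    ∀ a b, Q.Adj a b ↔ a ≠ b ∧ ∃ u ∈ W a, ∃ v ∈ W b, G.Adj u v

/-- `part` is a `C`-right-module-partition of `G` if it is an RMP all of whose
transversal minors belong to `C`. -/
def IsCRMP (C : ∀ m : ℕ, SimpleGraph (Fin m) → Prop) {n k : ℕ}
    (G : SimpleGraph (Fin n)) (part : Fin n → Fin k) : Prop :=
  IsRMP G part ∧
  ∀ (ℓ : ℕ) (Q : SimpleGraph (Fin ℓ)), IsTransversalMinor G part Q → C ℓ Q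

/-- `Q` is the quotient `G/P` : parts are contracted to single vertices, with
an edge `i j` iff some edge of `G` joins `V_i` and `V_j`. -/
def IsQuotient {n k : ℕ} (G : SimpleGraph (Fin n)) (part : Fin n → Fin k)
    (Q : SimpleGraph (Fin k)) : Prop :=
  ∀ i j, Q.Adj i j ↔ i ≠ j ∧ ∃ u v, part u = i ∧ part v = j ∧ G.Adj u v

def ZoneHorizontal {m n : ℕ} (M : Matrix (Fin m) (Fin n) (Fin 3))
    (R : Fin m → Prop) (C : Fin n → Prop) : Prop :=
  ∀ i, R i → ∀ j j', C j → C j' → M i j = M i j'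

def ZoneVertical {m n : ℕ} (M : Matrix (Fin m) (Fin n) (Fin 3))
    (R : Fin m → Prop) (C : Fin n → Prop) : Prop :=
  ∀ j, C j → ∀ i i', R i → R i' → M i j = M i' j

/-- A zone is mixed if it is neither horizontal nor vertical, or if it has at
least two rows and two columns and contains a `*` (= `2`) entry. -/
def ZoneMixed {m n : ℕ} (M : Matrix (Fin m) (Fin n) (Fin 3))
    (R : Fin m → Prop) (C : Fin n → Prop) : Prop :=
  (¬ ZoneHorizontal M R C ∧ ¬ ZoneVertical M R C) ∨
    ((∃ i i', R i ∧ R i' ∧ i ≠ i') ∧ (∃ j j', C j ∧ C j' ∧ j ≠ j') ∧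
      ∃ i j, R i ∧ C j ∧ M i j = 2)

open Classical in
/-- The adjacency matrix of `G` in the natural order of `Fin n`, with `*`
(= `2`) on the diagonal. -/
noncomputable def adjMat {n : ℕ} (G : SimpleGraph (Fin n)) :
    Matrix (Fin n) (Fin n) (Fin 3) :=
  fun i j => if i = j then 2 else if G.Adj i j then 1 else 0

/-- `(G, part)` is `d`-almost mixed free: every coarsening of the partition
into `d` consecutive blocks (a monotone surjective map `c : Fin k → Fin d`)
has some off-diagonal zone which is not mixed. -/
def AlmostMixedFreePair {n k : ℕ} (G : SimpleGraph (Fin n))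
    (part : Fin n → Fin k) (d : ℕ) : Prop :=
  ∀ c : Fin k → Fin d, Monotone c → Function.Surjective c →
    ∃ i j : Fin d, i ≠ j ∧
      ¬ ZoneMixed (adjMat G) (fun x => c (part x) = i) (fun y => c (part y) = j)

/-!
Colouring `G/P` and composing with `part` colours `G`, because the parts are independent; and
`G/P` is a transversal minor, so `χ(G) ≤ ω(G/P)^c`. It remains to show `ω(G/P) ≤ ω(G)^d`.

Let `X` be a clique of `G/P` which is `e`-almost mixed free and whose parts carry no clique of `G`
with more than `w` vertices, and let `p` be the first part of `X` such that the parts of `X` up to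
`p` carry a clique `K` of size `w`. The parts of `X` before `p` carry no `w`-clique. The parts after
`p` are `(e-1)`-almost mixed free: prepend the block of parts `≤ p` to a coarsening of them; a
horizontal or vertical zone between this block and a block containing a later part `t` yields, by
the module property, a vertex of `V_t` complete to `K`, hence a clique of size `w + 1`. By
induction, `|X| ≤ (w-1)^e + 1 + w^(e-1) ≤ w^e`.
-/

section Zones

variable {m m' : ℕ} {M : Matrix (Fin m) (Fin m') (Fin 3)}

theorem ZoneMixed.mono {R R' : Fin m → Prop} {C C' : Fin m' → Prop}
    (hR : ∀ i, R' i → R i) (hC : ∀ j, C' j → C j) (h : ZoneMixed M R' C') :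
    ZoneMixed M R C := by
  rcases h with ⟨hH, hV⟩ | ⟨⟨i, i', hi, hi', hii'⟩, ⟨j, j', hj, hj', hjj'⟩, i₀, j₀, hi₀, hj₀, h₂⟩
  · exact Or.inl
      ⟨fun hH' => hH fun i hi j j' hj hj' => hH' i (hR i hi) j j' (hC j hj) (hC j' hj'),
        fun hV' => hV fun j hj i i' hi hi' => hV' j (hC j hj) i i' (hR i hi) (hR i' hi')⟩
  · exact Or.inr ⟨⟨i, i', hR i hi, hR i' hi', hii'⟩, ⟨j, j', hC j hj, hC j' hj', hjj'⟩,
      i₀, j₀, hR i₀ hi₀, hC j₀ hj₀, h₂⟩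

theorem ZoneMixed.swap {M : Matrix (Fin m) (Fin m) (Fin 3)} (hM : M.IsSymm)
    {R C : Fin m → Prop} (h : ZoneMixed M R C) : ZoneMixed M C R := by
  rcases h with ⟨hH, hV⟩ | ⟨hR, hC, i₀, j₀, hi₀, hj₀, h₂⟩
  · refine Or.inl ⟨fun hH' => hV fun j hj i i' hi hi' => ?_,
      fun hV' => hH fun i hi j j' hj hj' => ?_⟩
    · exact (hM.apply j i).trans ((hH' j hj i i' hi hi').trans (hM.apply j i').symm)
    · exact (hM.apply i j).symm.trans ((hV' i hi j j' hj hj').trans (hM.apply i j'))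
  · exact Or.inr ⟨hC, hR, j₀, i₀, hj₀, hi₀, by rwa [hM.apply]⟩

end Zones

section AdjMat

variable {n : ℕ} {G : SimpleGraph (Fin n)}

theorem adjMat_isSymm : (adjMat G).IsSymm := by
  refine Matrix.ext fun x y => ?_
  by_cases h : x = y
  · simp [h]
  · simp only [Matrix.transpose_apply, adjMat, h, Ne.symm h, if_false]
    rw [G.adj_comm]

theorem adjMat_eq_one_iff {x y : Fin n} : adjMat G x y = 1 ↔ G.Adj x y := by
  unfold adjMat
  split_ifs with hxy hadj <;> simp_all

end AdjMat

section Quotient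

variable {n k : ℕ} (G : SimpleGraph (Fin n)) (part : Fin n → Fin k)

def quotientGraph : SimpleGraph (Fin k) where
  Adj i j := i ≠ j ∧ ∃ u v, part u = i ∧ part v = j ∧ G.Adj u v
  symm := ⟨fun _ _ ⟨hij, u, v, hu, hv, huv⟩ => ⟨hij.symm, v, u, hv, hu, huv.symm⟩⟩
  loopless := ⟨fun _ h => h.1 rfl⟩

variable {G part}

def quotientHom (hind : ∀ x y, part x = part y → ¬ G.Adj x y) :
    G →g quotientGraph G part where
  toFun := part
  map_rel' {u v} huv := ⟨fun h => hind u v h huv, u, v, rfl, rfl, huv⟩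

theorem isTransversalMinor_quotientGraph (hsurj : Function.Surjective part) :
    IsTransversalMinor G part (quotientGraph G part) := by
  classical
  refine ⟨id, fun i => Finset.univ.filter (part · = i), strictMono_id, fun i => ?_,
    fun i v hv => by simpa using hv, fun i j => by simp [quotientGraph]⟩
  obtain ⟨v, hv⟩ := hsurj i
  exact ⟨v, by simpa using hv⟩

theorem IsRMP.exists_adj_of_lt (h : IsRMP G part) {i t : Fin k} (hit : i < t)
    (hadj : (quotientGraph G part).Adj i t) :
    ∃ v, part v = t ∧ ∀ x, part x = i → G.Adj x v := by
  obtain ⟨-, u, v, rfl, rfl, huv⟩ := hadj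
  exact ⟨v, rfl, fun x hx => (h.2.2.2 x u v hx (by rwa [hx])).mpr huv⟩

end Quotient

section LocalBounds

variable {n k : ℕ} (G : SimpleGraph (Fin n)) (part : Fin n → Fin k)

def CliqueBoundOn (X : Finset (Fin k)) (w : ℕ) : Prop :=
  ∀ K : Finset (Fin n), G.IsClique (K : Set (Fin n)) → (∀ v ∈ K, part v ∈ X) → K.card ≤ w

def AlmostMixedFreeOn (X : Finset (Fin k)) (e : ℕ) : Prop :=
  ∀ c : Fin k → Fin e, Monotone c → (∀ t, ∃ x ∈ X, c x = t) →
    ∃ i j : Fin e, i ≠ j ∧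
      ¬ ZoneMixed (adjMat G) (fun x => part x ∈ X ∧ c (part x) = i)
        (fun y => part y ∈ X ∧ c (part y) = j)

variable {G part}

theorem AlmostMixedFreePair.almostMixedFreeOn {d : ℕ} (h : AlmostMixedFreePair G part d)
    (X : Finset (Fin k)) : AlmostMixedFreeOn G part X d := by
  intro c hc hcX
  obtain ⟨i, j, hij, hnm⟩ := h c hc fun t => (hcX t).imp fun _ hx => hx.2
  exact ⟨i, j, hij, fun hm => hnm (hm.mono (fun _ hx => hx.2) (fun _ hy => hy.2))⟩

theorem AlmostMixedFreeOn.mono {X X' : Finset (Fin k)} (hX : X' ⊆ X) {e : ℕ}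
    (h : AlmostMixedFreeOn G part X e) : AlmostMixedFreeOn G part X' e := by
  intro c hc hcX
  obtain ⟨i, j, hij, hnm⟩ := h c hc fun t => (hcX t).imp fun _ hx => ⟨hX hx.1, hx.2⟩
  exact ⟨i, j, hij, fun hm =>
    hnm (hm.mono (fun _ hx => ⟨hX hx.1, hx.2⟩) (fun _ hy => ⟨hX hy.1, hy.2⟩))⟩

theorem AlmostMixedFreeOn.eq_empty_of_one {X : Finset (Fin k)}
    (h : AlmostMixedFreeOn G part X 1) : X = ∅ := by
  refine X.eq_empty_of_forall_notMem fun x hx => ?_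
  obtain ⟨i, j, hij, -⟩ := h (fun _ => 0) monotone_const fun t => ⟨x, hx, Subsingleton.elim _ _⟩
  exact hij (Subsingleton.elim i j)

theorem CliqueBoundOn.eq_empty_of_zero (hsurj : Function.Surjective part) {X : Finset (Fin k)}
    (h : CliqueBoundOn G part X 0) : X = ∅ := by
  refine X.eq_empty_of_forall_notMem fun x hx => ?_
  obtain ⟨v, rfl⟩ := hsurj x
  simpa using h {v} (by simp) (by simpa using hx)

theorem CliqueBoundOn.card_le_one {X : Finset (Fin k)}
    (hX : (quotientGraph G part).IsClique (X : Set (Fin k))) (h : CliqueBoundOn G part X 1) :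
    X.card ≤ 1 := by
  refine Finset.card_le_one.mpr fun a ha b hb => by_contra fun hab => ?_
  obtain ⟨-, u, v, rfl, rfl, huv⟩ := hX ha hb hab
  have := h {u, v} (by simpa [SimpleGraph.isClique_pair] using fun _ => huv)
    (by simp [ha, hb])
  simp [Finset.card_pair huv.ne] at this

end LocalBounds

section Coarsening

variable {k e : ℕ}

def prependBlock (p : Fin k) (c : Fin k → Fin e) (y : Fin k) : Fin (e + 1) :=
  if y ≤ p then 0 else (c y).succ

variable {p y : Fin k} {c : Fin k → Fin e}

theorem prependBlock_eq_zero_iff : prependBlock p c y = 0 ↔ y ≤ p := by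
  unfold prependBlock
  split_ifs with h <;> simp [h]

theorem prependBlock_eq_succ_iff {i : Fin e} : prependBlock p c y = i.succ ↔ p < y ∧ c y = i := by
  unfold prependBlock
  split_ifs with h
  · simp [h, (Fin.succ_ne_zero i).symm]
  · simp [not_le.mp h]

theorem Monotone.prependBlock (hc : Monotone c) : Monotone (prependBlock p c) := by
  intro a b hab
  unfold _root_.prependBlock
  split_ifs with ha hb hb
  exacts [le_rfl, Fin.zero_le _, absurd (hab.trans hb) ha, Fin.succ_le_succ_iff.mpr (hc hab)]

end Coarsening

theorem Finset.card_le_card_filter_lt_add_card_filter_gt {α : Type*} [LinearOrder α]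
    (X : Finset α) (p : α) :
    X.card ≤ (X.filter (· < p)).card + (X.filter (p < ·)).card + 1 := by
  calc X.card ≤ (X.filter (· < p) ∪ insert p (X.filter (p < ·))).card := by
        refine Finset.card_le_card fun q hq => ?_
        rcases lt_trichotomy q p with h | h | h <;> simp [hq, h]
    _ ≤ _ := (Finset.card_union_le _ _).trans (Nat.add_le_add_left (Finset.card_insert_le _ _) _)

theorem Nat.pow_succ_add_succ_pow_lt {w e : ℕ} (hw : 1 ≤ w) (he : 1 ≤ e) :
    w ^ (e + 1) + (w + 1) ^ e < (w + 1) ^ (e + 1) := by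
  have h : w ^ e + 1 ≤ (w + 1) ^ e := Nat.pow_lt_pow_left (Nat.lt_succ_self w) (by omega)
  nlinarith [pow_succ w e, pow_succ (w + 1) e]

section RightModulePartition

variable {n k : ℕ} {G : SimpleGraph (Fin n)} {part : Fin n → Fin k} {X : Finset (Fin k)}
  {p t : Fin k} {w e : ℕ} {R C : Fin n → Prop}

theorem IsRMP.exists_adj_of_not_zoneMixed (hRMP : IsRMP G part)
    (hX : (quotientGraph G part).IsClique (X : Set (Fin k))) (hp : p ∈ X) (ht : t ∈ X)
    (hpt : p < t) (hR : ∀ x, part x ∈ X → part x ≤ p → R x) (hC : ∀ y, part y = t → C y)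
    (hnm : ¬ ZoneMixed (adjMat G) R C) :
    ∃ v, part v = t ∧ ∀ x, part x ∈ X → part x ≤ p → G.Adj x v := by
  have hquot : ∀ i ∈ X, i < t → ∃ v, part v = t ∧ ∀ x, part x = i → G.Adj x v :=
    fun i hi hit => hRMP.exists_adj_of_lt hit (hX hi ht hit.ne)
  obtain ⟨v₀, hv₀, hpv₀⟩ := hquot p hp hpt
  have hHV : ZoneHorizontal (adjMat G) R C ∨ ZoneVertical (adjMat G) R C := by
    by_contra! h
    exact hnm (Or.inl h)
  refine ⟨v₀, hv₀, fun x hxX hxp => adjMat_eq_one_iff.mp ?_⟩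
  rcases hHV with hH | hV
  -- Row `x` is constant on `V_t`, and some vertex of `V_t` sees all of the part of `x`.
  · obtain ⟨v, hv, hxv⟩ := hquot (part x) hxX (hxp.trans_lt hpt)
    exact (hH x (hR x hxX hxp) v₀ v (hC v₀ hv₀) (hC v hv)).trans
      (adjMat_eq_one_iff.mpr (hxv x rfl))
  -- Column `v₀` is constant on the rows, and `v₀` sees all of `V_p`.
  · obtain ⟨z, hz⟩ := hRMP.2.1 p
    exact (hV v₀ (hC v₀ hv₀) x z (hR x hxX hxp) (hR z (hz ▸ hp) hz.le)).trans
      (adjMat_eq_one_iff.mpr (hpv₀ z hz))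

theorem IsRMP.zoneMixed_of_isClique (hRMP : IsRMP G part)
    (hX : (quotientGraph G part).IsClique (X : Set (Fin k))) (hB : CliqueBoundOn G part X w)
    {K : Finset (Fin n)} (hK : G.IsClique (K : Set (Fin n)))
    (hKX : ∀ v ∈ K, part v ∈ X ∧ part v ≤ p) (hKw : w ≤ K.card) (hp : p ∈ X) (ht : t ∈ X)
    (hpt : p < t) (hR : ∀ x, part x ∈ X → part x ≤ p → R x) (hC : ∀ y, part y = t → C y) :
    ZoneMixed (adjMat G) R C := by
  by_contra hnm
  obtain ⟨v, hv, hvX⟩ := hRMP.exists_adj_of_not_zoneMixed hX hp ht hpt hR hC hnm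
  have hvK : v ∉ K := fun hvK => (hKX v hvK).2.not_gt (hv ▸ hpt)
  have hKv : G.IsClique (insert v K : Finset (Fin n)) := by
    rw [Finset.coe_insert]
    exact hK.insert fun x hx _ => (hvX x (hKX x hx).1 (hKX x hx).2).symm
  have := hB _ hKv fun x hx => by
    rcases Finset.mem_insert.mp hx with rfl | hx
    exacts [hv ▸ ht, (hKX x hx).1]
  rw [Finset.card_insert_of_notMem hvK] at this
  omega

theorem IsRMP.almostMixedFreeOn_filter_gt (hRMP : IsRMP G part)
    (hX : (quotientGraph G part).IsClique (X : Set (Fin k))) (hB : CliqueBoundOn G part X w)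
    {K : Finset (Fin n)} (hK : G.IsClique (K : Set (Fin n)))
    (hKX : ∀ v ∈ K, part v ∈ X ∧ part v ≤ p) (hKw : w ≤ K.card) (hp : p ∈ X)
    (hAMF : AlmostMixedFreeOn G part X (e + 1)) :
    AlmostMixedFreeOn G part (X.filter (p < ·)) e := by
  intro c hc hcX
  have block_zero : ∀ x, part x ∈ X → part x ≤ p →
      part x ∈ X ∧ prependBlock p c (part x) = 0 :=
    fun x hx hxp => ⟨hx, prependBlock_eq_zero_iff.mpr hxp⟩
  have block_succ : ∀ i x, part x ∈ X.filter (p < ·) ∧ c (part x) = i →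
      part x ∈ X ∧ prependBlock p c (part x) = i.succ := by
    intro i x ⟨hx, hxi⟩
    rw [Finset.mem_filter] at hx
    exact ⟨hx.1, prependBlock_eq_succ_iff.mpr ⟨hx.2, hxi⟩⟩
  have later_part : ∀ i : Fin e, ∃ t ∈ X, p < t ∧
      ∀ y, part y = t → part y ∈ X ∧ prependBlock p c (part y) = i.succ := by
    intro i
    obtain ⟨t, ht, rfl⟩ := hcX i
    rw [Finset.mem_filter] at ht
    exact ⟨t, ht.1, ht.2, fun y hy => block_succ _ y ⟨hy ▸ Finset.mem_filter.mpr ht, hy ▸ rfl⟩⟩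
  have hsurj : ∀ s, ∃ x ∈ X, prependBlock p c x = s := by
    refine Fin.cases ⟨p, hp, prependBlock_eq_zero_iff.mpr le_rfl⟩ fun i => ?_
    obtain ⟨t, ht, rfl⟩ := hcX i
    rw [Finset.mem_filter] at ht
    exact ⟨t, ht.1, prependBlock_eq_succ_iff.mpr ⟨ht.2, rfl⟩⟩
  obtain ⟨i, j, hij, hnm⟩ := hAMF _ hc.prependBlock hsurj
  induction i using Fin.cases with
  | zero =>
    induction j using Fin.cases with
    | zero => exact absurd rfl hij
    | succ j =>
      obtain ⟨t, ht, hpt, htj⟩ := later_part j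
      exact absurd (hRMP.zoneMixed_of_isClique hX hB hK hKX hKw hp ht hpt block_zero htj) hnm
  | succ i =>
    induction j using Fin.cases with
    | zero =>
      obtain ⟨t, ht, hpt, hti⟩ := later_part i
      exact absurd ((hRMP.zoneMixed_of_isClique hX hB hK hKX hKw hp ht hpt block_zero hti).swap
        adjMat_isSymm) hnm
    | succ j =>
      exact ⟨i, j, fun h => hij (h ▸ rfl), fun hm => hnm (hm.mono (block_succ i) (block_succ j))⟩

theorem exists_first_part_of_not_cliqueBoundOn (hw : ¬ CliqueBoundOn G part X w) :
    ∃ p ∈ X, CliqueBoundOn G part (X.filter (· < p)) w ∧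
      ∃ K : Finset (Fin n), G.IsClique (K : Set (Fin n)) ∧
        (∀ v ∈ K, part v ∈ X ∧ part v ≤ p) ∧ w < K.card := by
  classical
  let S := X.filter fun q => ¬ CliqueBoundOn G part (X.filter (· ≤ q)) w
  have top_part_mem : ∀ K : Finset (Fin n), G.IsClique (K : Set (Fin n)) →
      (∀ v ∈ K, part v ∈ X) → w < K.card → ∃ v ∈ K, part v ∈ S := by
    intro K hK hKX hKw
    obtain ⟨v, hv, hvmax⟩ := K.exists_max_image part (Finset.card_pos.mp (by omega))
    refine ⟨v, hv, Finset.mem_filter.mpr ⟨hKX v hv, fun hB => ?_⟩⟩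
    exact (hB K hK fun x hx => Finset.mem_filter.mpr ⟨hKX x hx, hvmax x hx⟩).not_gt hKw
  obtain ⟨K, hK, hKX, hKw⟩ : ∃ K : Finset (Fin n), G.IsClique (K : Set (Fin n)) ∧
      (∀ v ∈ K, part v ∈ X) ∧ w < K.card := by
    simpa [CliqueBoundOn] using hw
  obtain ⟨p, hpS, hpmin⟩ := S.exists_min_image id <|
    let ⟨v, _, hv⟩ := top_part_mem K hK hKX hKw; ⟨part v, hv⟩
  obtain ⟨hp, hpB⟩ := Finset.mem_filter.mp hpS
  refine ⟨p, hp, fun K' hK' hK'X => not_lt.mp fun hK'w => ?_, ?_⟩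
  · obtain ⟨v, hv, hvS⟩ := top_part_mem K' hK' (fun x hx => (Finset.mem_filter.mp (hK'X x hx)).1)
      hK'w
    exact (hpmin _ hvS).not_gt (Finset.mem_filter.mp (hK'X v hv)).2
  · simpa [CliqueBoundOn] using hpB

theorem IsRMP.card_le_pow (hRMP : IsRMP G part) (he : 1 ≤ e)
    (hX : (quotientGraph G part).IsClique (X : Set (Fin k))) (hB : CliqueBoundOn G part X w)
    (hAMF : AlmostMixedFreeOn G part X e) : X.card ≤ w ^ e := by
  induction e, he using Nat.le_induction generalizing w X with
  | base => simp [hAMF.eq_empty_of_one]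
  | succ e he ihe =>
    induction w generalizing X with
    | zero => simp [hB.eq_empty_of_zero hRMP.2.1]
    | succ w ihw =>
      by_cases hw : CliqueBoundOn G part X w
      · exact (ihw hX hw hAMF).trans (Nat.pow_le_pow_left w.le_succ _)
      rcases Nat.eq_zero_or_pos w with rfl | hw1
      · simpa using hB.card_le_one hX
      obtain ⟨p, hp, hB₁, K, hK, hKX, hKw⟩ := exists_first_part_of_not_cliqueBoundOn hw
      have h₁ := ihw (hX.subset (Finset.coe_subset.mpr (Finset.filter_subset _ _))) hB₁
        (hAMF.mono (Finset.filter_subset _ _))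
      have h₂ := ihe (hX.subset (Finset.coe_subset.mpr (Finset.filter_subset _ _)))
        (fun K hK hKX => hB K hK fun v hv => (Finset.mem_filter.mp (hKX v hv)).1)
        (hRMP.almostMixedFreeOn_filter_gt hX hB hK hKX hKw hp hAMF)
      calc X.card ≤ (X.filter (· < p)).card + (X.filter (p < ·)).card + 1 :=
            X.card_le_card_filter_lt_add_card_filter_gt p
        _ ≤ w ^ (e + 1) + (w + 1) ^ e + 1 := by gcongr
        _ ≤ (w + 1) ^ (e + 1) := Nat.pow_succ_add_succ_pow_lt hw1 he

theorem IsRMP.cliqueNum_quotientGraph_le (hRMP : IsRMP G part) {d : ℕ} (hd : 1 ≤ d)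
    (hAMF : AlmostMixedFreePair G part d) :
    (quotientGraph G part).cliqueNum ≤ G.cliqueNum ^ d := by
  obtain ⟨s, hs⟩ := (quotientGraph G part).exists_isNClique_cliqueNum
  rw [← hs.card_eq]
  exact hRMP.card_le_pow hd hs.isClique (fun K hK _ => hK.card_le_cliqueNum)
    (hAMF.almostMixedFreeOn s)

end RightModulePartition

/-- Let `C` be a class of ordered graphs with polynomial χ-bounding function
`x ↦ x^c`. If `part` is a `C`-right-module-partition of `G` such that
`(G, part)` is `d`-almost mixed free, then `χ(G) ≤ ω(G)^{cd}`. -/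
theorem colorable_of_CRMP_almostMixedFree {n k d c : ℕ} (hd : 1 ≤ d)
    (C : ∀ m : ℕ, SimpleGraph (Fin m) → Prop)
    (hchi : ∀ (m : ℕ) (H : SimpleGraph (Fin m)), C m H →
      H.Colorable (H.cliqueNum ^ c))
    (G : SimpleGraph (Fin n)) (part : Fin n → Fin k)
    (hCRMP : IsCRMP C G part) (hAMF : AlmostMixedFreePair G part d) :
    G.Colorable (G.cliqueNum ^ (c * d)) := by
  obtain ⟨hRMP, hminors⟩ := hCRMP
  have hQ := hchi k _ (hminors k _ (isTransversalMinor_quotientGraph hRMP.2.1))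
  refine (hQ.of_hom (quotientHom hRMP.2.2.1)).mono ?_
  calc (quotientGraph G part).cliqueNum ^ c ≤ (G.cliqueNum ^ d) ^ c :=
        Nat.pow_le_pow_left (hRMP.cliqueNum_quotientGraph_le hd hAMF) c
    _ = G.cliqueNum ^ (c * d) := (pow_mul' _ _ _).symm
end

section
/- If C is a hereditary class with χ-bounding function ω^k (k ≥ 1), then the substitution closure C_s is polynomially χ-bounded with function χ ≤ ω^{2k+3}. -/
universe u

/-- A finite rooted tree on the node set `α`, given by its root and parent
function (the root is its own parent, and iterating the parent function
reaches the root from every node). -/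
structure ParentTree (α : Type u) where
  root : α
  parent : α → α
  parent_root : parent root = root
  reaches_root : ∀ x, ∃ m : ℕ, parent^[m] x = root

namespace ParentTree

variable {α : Type u} (T : ParentTree α)

/-- `y` is a child of `x`. -/
def IsChild (y x : α) : Prop := T.parent y = x ∧ y ≠ x

/-- A leaf is a node with no children. -/
def IsLeaf (x : α) : Prop := ∀ y, ¬ T.IsChild y x

/-- `x` is a (weak) ancestor of `y`. -/
def Ancestor (x y : α) : Prop := ∃ m : ℕ, T.parent^[m] y = x

def StrictAncestor (x y : α) : Prop := T.Ancestor x y ∧ x ≠ y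

/-- `z` is the closest common ancestor of `x` and `y`. -/
def IsLCA (z x y : α) : Prop :=
  T.Ancestor z x ∧ T.Ancestor z y ∧
  ∀ w, T.Ancestor w x → T.Ancestor w y → T.Ancestor w z

/-- `y` is a grandchild of `x`. -/
def IsGrandchild (y x : α) : Prop := ∃ z, T.IsChild y z ∧ T.IsChild z x

end ParentTree

/-- `R` is the realization `R(T,g)`: vertices are the leaves of `T`, two
leaves adjacent iff the children of their closest common ancestor `z` above
them are adjacent in `g(z)`. -/
def IsRealization {α : Type u} (T : ParentTree α) (g : α → SimpleGraph α)
    (R : SimpleGraph {v : α // T.IsLeaf v}) : Prop :=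
  ∀ u v : {v : α // T.IsLeaf v}, R.Adj u v ↔
    ∃ z x' y', T.IsLCA z u v ∧ T.IsChild x' z ∧ T.IsChild y' z ∧
      T.Ancestor x' u ∧ T.Ancestor y' v ∧ (g z).Adj x' y'

/-!
Let `ω(t)` be the clique number of `R` on the leaves of `S` below `t`, and induct on a bound
`W ≥ ω(root)`. If `ω(root) ≤ W/2` the induction hypothesis applies directly. Otherwise cut the
tree at the maximal nodes `c` with `ω(c) ≤ W/2`: the leaves below such a `c` form a module of `R`,
coloured by induction with `ω(c)^(2k+3)` colours. The modules are sorted into dyadic classes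
`j = ⌊log₂ ω(c)⌋`, and class `j` gets its own block of `(W/2^j)^k · M_j` colours, where
`M_j = min(2^(j+1), W/2)^(2k+2) · W`. Inside the block, a leaf `v` of the module `c` gets the
colour `κ(c) · M_j + o(parent c) + f_c(v)`:
* `κ` properly colours, in `g(z)`, the class-`j` modules among the children of `z`; a clique of
  `m` of them lifts to a clique of `R` of size at least `m · 2^j`, so `(W/2^j)^k` colours suffice
  by the χ-bound of `C`;
* the offset `o(t)` sums, over the nodes `s` on the path from `t` to the root, the largest colour
  budget `ω(a)^(2k+3)` of a class-`j` module `a` that is a sibling of `s` adjacent to it in `g`.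
Two adjacent leaves in different modules `c`, `c'` sit below adjacent children `x`, `y` of a node.
Both cannot lie strictly above the cut, since their cliques would merge into one larger than `W`;
if `x = c` and `y = c'` then `κ` separates them, and if `x = c` while `y` is above `c'`, the offset
of `c'` exceeds that of `c` by at least the budget of `c`. The offsets stay below `M_j` because the
modules adjacent to a path form a clique with any clique below it, and the blocks of all classes
with `2^j ≤ W/2` add up to at most `W^(2k+3)`.
-/

open Finset
open scoped Classical

namespace ParentTree

abbrev Leaf {α : Type u} (T : ParentTree α) : Type u := {v : α // T.IsLeaf v}

variable {α : Type u} {T : ParentTree α}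

theorem iterate_parent_root (n : ℕ) : T.parent^[n] T.root = T.root :=
  Function.iterate_fixed T.parent_root n

theorem ancestor_refl (x : α) : T.Ancestor x x := ⟨0, rfl⟩

theorem Ancestor.trans {x y z : α} (hxy : T.Ancestor x y) (hyz : T.Ancestor y z) :
    T.Ancestor x z := by
  obtain ⟨m, rfl⟩ := hxy
  obtain ⟨n, rfl⟩ := hyz
  exact ⟨m + n, Function.iterate_add_apply _ _ _ _⟩

theorem ancestor_parent (x : α) : T.Ancestor (T.parent x) x := ⟨1, rfl⟩

theorem root_ancestor (x : α) : T.Ancestor T.root x := T.reaches_root x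

theorem eq_root_of_ancestor_root {x : α} (h : T.Ancestor x T.root) : x = T.root := by
  obtain ⟨m, hm⟩ := h
  rw [← hm, iterate_parent_root]

theorem eq_root_of_isPeriodicPt {x : α} {n : ℕ} (hn : 0 < n)
    (hx : Function.IsPeriodicPt T.parent n x) : x = T.root := by
  obtain ⟨m, hm⟩ := T.reaches_root x
  rw [← (hx.mul_const m).eq, ← Nat.sub_add_cancel (Nat.le_mul_of_pos_left m hn),
    Function.iterate_add_apply, hm, iterate_parent_root]

theorem eq_root_of_parent_eq {x : α} (h : T.parent x = x) : x = T.root :=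
  eq_root_of_isPeriodicPt one_pos h

theorem Ancestor.antisymm {x y : α} (hxy : T.Ancestor x y) (hyx : T.Ancestor y x) : x = y := by
  obtain ⟨a, rfl⟩ := hxy
  obtain ⟨b, hb⟩ := hyx
  rcases Nat.eq_zero_or_pos (b + a) with h | h
  · obtain rfl : a = 0 := by omega
    rfl
  · have hy := eq_root_of_isPeriodicPt h ((Function.iterate_add_apply _ _ _ _).trans hb)
    rw [hy, iterate_parent_root]

theorem ancestor_total {x y z : α} (hx : T.Ancestor x z) (hy : T.Ancestor y z) :
    T.Ancestor x y ∨ T.Ancestor y x := by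
  obtain ⟨a, rfl⟩ := hx
  obtain ⟨b, rfl⟩ := hy
  rcases le_total a b with h | h
  · exact Or.inr ⟨b - a, by rw [← Function.iterate_add_apply, Nat.sub_add_cancel h]⟩
  · exact Or.inl ⟨a - b, by rw [← Function.iterate_add_apply, Nat.sub_add_cancel h]⟩

theorem Ancestor.parent_of_ne {x y : α} (h : T.Ancestor x y) (hne : x ≠ y) :
    T.Ancestor x (T.parent y) := by
  obtain ⟨_ | n, hn⟩ := h
  · exact absurd hn.symm hne
  · exact ⟨n, hn⟩

theorem ancestor_iff_eq_or_ancestor_parent {x y : α} :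
    T.Ancestor x y ↔ x = y ∨ T.Ancestor x (T.parent y) := by
  refine ⟨fun h => or_iff_not_imp_left.2 h.parent_of_ne, ?_⟩
  rintro (rfl | h)
  exacts [ancestor_refl x, h.trans (ancestor_parent y)]

theorem ancestor_trichotomy {x c u : α} (hx : T.Ancestor x u) (hc : T.Ancestor c u) :
    x = c ∨ T.Ancestor x (T.parent c) ∨ T.Ancestor c (T.parent x) := by
  by_cases hxc : x = c
  · exact Or.inl hxc
  rcases ancestor_total hx hc with h | h
  · exact Or.inr (Or.inl (h.parent_of_ne hxc))
  · exact Or.inr (Or.inr (h.parent_of_ne (Ne.symm hxc)))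

theorem parent_induction {P : α → Prop} (t : α) (root : P T.root)
    (step : ∀ t, t ≠ T.root → P (T.parent t) → P t) : P t := by
  obtain ⟨m, hm⟩ := T.reaches_root t
  induction m generalizing t with
  | zero => exact (show t = T.root from hm) ▸ root
  | succ m ih =>
    by_cases ht : t = T.root
    · exact ht ▸ root
    · exact step t ht (ih _ hm)

theorem isChild_parent {t : α} (ht : t ≠ T.root) : T.IsChild t (T.parent t) :=
  ⟨rfl, fun h => ht (eq_root_of_parent_eq h.symm)⟩

theorem IsChild.ancestor {a z : α} (h : T.IsChild a z) : T.Ancestor z a :=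
  h.1 ▸ ancestor_parent a

theorem IsChild.ne_root {a z : α} (h : T.IsChild a z) : a ≠ T.root := by
  rintro rfl
  exact h.2 (T.parent_root.symm.trans h.1)

theorem IsChild.eq_of_ancestor {a b z : α} (ha : T.IsChild a z) (hb : T.IsChild b z)
    (h : T.Ancestor a b) : a = b := by
  by_contra hne
  have hza : T.Ancestor a z := hb.1 ▸ h.parent_of_ne hne
  exact ha.2 (hza.antisymm ha.ancestor)

theorem IsChild.eq_of_ancestor_of_ancestor {a b z x : α} (ha : T.IsChild a z)
    (hb : T.IsChild b z) (hax : T.Ancestor a x) (hbx : T.Ancestor b x) : a = b := by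
  rcases ancestor_total hax hbx with h | h
  exacts [ha.eq_of_ancestor hb h, (hb.eq_of_ancestor ha h).symm]

theorem IsLeaf.eq_of_ancestor {v p : α} (hv : T.IsLeaf v) (h : T.Ancestor v p) : p = v := by
  obtain ⟨m, hm⟩ := h
  induction m with
  | zero => exact hm
  | succ n ih =>
    rw [Function.iterate_succ_apply'] at hm
    by_contra hne
    exact hv _ ⟨hm, fun h => hne (ih h)⟩

theorem IsChild.eq_or_ancestor_parent_or_ancestor {x z c u v : α} (hxz : T.IsChild x z)
    (hxu : T.Ancestor x u) (hcu : T.Ancestor c u) (hzv : T.Ancestor z v) :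
    x = c ∨ T.Ancestor x (T.parent c) ∨ T.Ancestor c v :=
  (ancestor_trichotomy hxu hcu).imp_right (Or.imp_right fun h => (hxz.1 ▸ h).trans hzv)

theorem isLCA_of_isChild {a b z u v : α} (ha : T.IsChild a z) (hb : T.IsChild b z)
    (hne : a ≠ b) (hu : T.Ancestor a u) (hv : T.Ancestor b v) : T.IsLCA z u v := by
  refine ⟨ha.ancestor.trans hu, hb.ancestor.trans hv, fun w hwu hwv => ?_⟩
  rcases ancestor_trichotomy hwu hu with hwa | h | h
  · exact absurd (ha.eq_of_ancestor_of_ancestor hb (hwa ▸ hwv) hv) hne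
  · exact ha.1 ▸ h
  · exact absurd (ha.eq_of_ancestor_of_ancestor hb (h.trans ((ancestor_parent w).trans hwv)) hv)
      hne

end ParentTree

open ParentTree

def IsColoringOn {V : Type*} (G : SimpleGraph V) (S : Finset V) (n : ℕ) (f : V → ℕ) : Prop :=
  (∀ v ∈ S, f v < n) ∧ ∀ u ∈ S, ∀ v ∈ S, G.Adj u v → f u ≠ f v

theorem IsColoringOn.mono {V : Type*} {G : SimpleGraph V} {S : Finset V} {n m : ℕ}
    {f : V → ℕ} (hf : IsColoringOn G S n f) (h : n ≤ m) : IsColoringOn G S m f :=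
  ⟨fun v hv => (hf.1 v hv).trans_le h, hf.2⟩

theorem IsColoringOn.colorable {V : Type*} [Fintype V] {G : SimpleGraph V} {n : ℕ}
    {f : V → ℕ} (hf : IsColoringOn G univ n f) : G.Colorable n :=
  ⟨.mk (fun v => ⟨f v, hf.1 v (mem_univ v)⟩)
    fun hadj heq => hf.2 _ (mem_univ _) _ (mem_univ _) hadj (congrArg Fin.val heq)⟩

section BlockEncoding

variable (K M : ℕ → ℕ)

def blockStart (j : ℕ) : ℕ := ∑ i ∈ range j, K i * M i

def blockEncode (j a r : ℕ) : ℕ := blockStart K M j + (a * M j + r)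

variable {K M}

theorem blockEncode_lt {j a r : ℕ} (ha : a < K j) (hr : r < M j) :
    blockEncode K M j a r < blockStart K M (j + 1) := by
  have : (a + 1) * M j ≤ K j * M j := Nat.mul_le_mul_right _ ha
  rw [add_one_mul] at this
  rw [blockEncode, blockStart, blockStart, sum_range_succ]
  omega

theorem blockEncode_lt_of_lt {j j' a a' r r' : ℕ} (ha : a < K j) (hr : r < M j) (hj : j < j') :
    blockEncode K M j a r < blockEncode K M j' a' r' :=
  (blockEncode_lt ha hr).trans_le <|
    (sum_le_sum_of_subset (range_subset_range.2 hj)).trans (Nat.le_add_right _ _)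

theorem eq_of_mul_add_eq {M a a' r r' : ℕ} (hr : r < M) (hr' : r' < M)
    (h : a * M + r = a' * M + r') : a = a' ∧ r = r' := by
  have hM : 0 < M := by omega
  obtain ⟨ha, hr⟩ := (Nat.div_mod_unique (a := a' * M + r') (d := a) (c := r) hM).2
    ⟨by rw [← h]; ring, hr⟩
  obtain ⟨ha', hr'⟩ := (Nat.div_mod_unique (a := a' * M + r') (d := a') (c := r') hM).2
    ⟨by ring, hr'⟩
  exact ⟨ha.symm.trans ha', hr.symm.trans hr'⟩

theorem blockEncode_inj {j j' a a' r r' : ℕ} (ha : a < K j) (hr : r < M j) (ha' : a' < K j')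
    (hr' : r' < M j') (h : blockEncode K M j a r = blockEncode K M j' a' r') :
    j = j' ∧ a = a' ∧ r = r' := by
  obtain rfl : j = j' := by
    by_contra hne
    rcases Nat.lt_or_gt_of_ne hne with hj | hj
    exacts [(blockEncode_lt_of_lt ha hr hj).ne h, (blockEncode_lt_of_lt ha' hr' hj).ne' h]
  exact ⟨rfl, eq_of_mul_add_eq hr hr' (Nat.add_left_cancel h)⟩

end BlockEncoding

section ClassSizes

def classCliqueBound (W j : ℕ) : ℕ := min (2 ^ (j + 1)) (W / 2)

def classColors (k W j : ℕ) : ℕ := (W / 2 ^ j) ^ k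

def classWidth (k W j : ℕ) : ℕ := classCliqueBound W j ^ (2 * k + 2) * W

theorem classColors_mul_classWidth_le (k W i : ℕ) :
    classColors k W i * classWidth k W i ≤ (2 * W) ^ k * ((W / 2) ^ (k + 1) * W) * 2 ^ (i + 1) := by
  set L := classCliqueBound W i
  have hL₁ : L ≤ 2 ^ (i + 1) := min_le_left _ _
  have hL₂ : L ≤ W / 2 := min_le_right _ _
  have hdiv : W / 2 ^ i * 2 ^ (i + 1) ≤ 2 * W := by
    rw [pow_succ, ← mul_assoc, mul_comm 2 W]
    exact Nat.mul_le_mul_right _ (Nat.div_mul_le_self W _)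
  calc (W / 2 ^ i) ^ k * (L ^ (2 * k + 2) * W)
      = (W / 2 ^ i) ^ k * L ^ k * (L ^ (k + 1) * W) * L := by ring
    _ ≤ (W / 2 ^ i) ^ k * (2 ^ (i + 1)) ^ k * ((W / 2) ^ (k + 1) * W) * 2 ^ (i + 1) := by
      gcongr
    _ = (W / 2 ^ i * 2 ^ (i + 1)) ^ k * ((W / 2) ^ (k + 1) * W) * 2 ^ (i + 1) := by ring
    _ ≤ (2 * W) ^ k * ((W / 2) ^ (k + 1) * W) * 2 ^ (i + 1) := by gcongr

theorem blockStart_classes_le {k W j : ℕ} (hj : 2 ^ j ≤ W / 2) :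
    blockStart (classColors k W) (classWidth k W) (j + 1) ≤ W ^ (2 * k + 3) := by
  have hgeom : ∑ i ∈ range (j + 1), 2 ^ (i + 1) ≤ 4 * (W / 2) := by
    have := Nat.geomSum_lt (le_refl 2) (fun i (hi : i ∈ range (j + 1)) => mem_range.1 hi)
    simp only [pow_succ, ← sum_mul] at this ⊢
    omega
  calc blockStart (classColors k W) (classWidth k W) (j + 1)
      ≤ ∑ i ∈ range (j + 1), (2 * W) ^ k * ((W / 2) ^ (k + 1) * W) * 2 ^ (i + 1) :=
        sum_le_sum fun i _ => classColors_mul_classWidth_le k W i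
    _ ≤ (2 * W) ^ k * ((W / 2) ^ (k + 1) * W) * (4 * (W / 2)) := by
        rw [← mul_sum]; gcongr
    _ = (2 * (W / 2)) ^ (k + 2) * W ^ (k + 1) := by ring
    _ ≤ W ^ (k + 2) * W ^ (k + 1) := by gcongr; omega
    _ = W ^ (2 * k + 3) := by ring

end ClassSizes

section CliqueNumBelow

variable {α : Type u} {T : ParentTree α} {g : α → SimpleGraph α} {R : SimpleGraph T.Leaf}
  {S : Finset T.Leaf}

noncomputable def cliquesBelow (R : SimpleGraph T.Leaf) (S : Finset T.Leaf) (t : α) :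
    Finset (Finset T.Leaf) :=
  S.powerset.filter fun s => R.IsClique (s : Set T.Leaf) ∧ ∀ p ∈ s, T.Ancestor t p.1

noncomputable def cliqueNumBelow (R : SimpleGraph T.Leaf) (S : Finset T.Leaf) (t : α) : ℕ :=
  (cliquesBelow R S t).sup card

theorem mem_cliquesBelow {s : Finset T.Leaf} {t : α} :
    s ∈ cliquesBelow R S t ↔ s ⊆ S ∧ R.IsClique (s : Set T.Leaf) ∧ ∀ p ∈ s, T.Ancestor t p.1 := by
  rw [cliquesBelow, mem_filter, mem_powerset]

theorem card_le_cliqueNumBelow {s : Finset T.Leaf} {t : α} (hs : s ⊆ S)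
    (hcl : R.IsClique (s : Set T.Leaf)) (ht : ∀ p ∈ s, T.Ancestor t p.1) :
    #s ≤ cliqueNumBelow R S t :=
  le_sup (mem_cliquesBelow.2 ⟨hs, hcl, ht⟩)

theorem exists_isClique_card_eq_cliqueNumBelow (R : SimpleGraph T.Leaf) (S : Finset T.Leaf)
    (t : α) : ∃ s ⊆ S, R.IsClique (s : Set T.Leaf) ∧ (∀ p ∈ s, T.Ancestor t p.1) ∧
      #s = cliqueNumBelow R S t := by
  obtain ⟨s, hs, hcard⟩ := exists_mem_eq_sup (cliquesBelow R S t)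
    ⟨∅, mem_cliquesBelow.2 ⟨empty_subset S, by simp, by simp⟩⟩ card
  obtain ⟨hsS, hcl, ht⟩ := mem_cliquesBelow.1 hs
  exact ⟨s, hsS, hcl, ht, hcard.symm⟩

theorem cliqueNumBelow_le_of_ancestor {t t' : α} (h : T.Ancestor t' t) :
    cliqueNumBelow R S t ≤ cliqueNumBelow R S t' :=
  Finset.sup_mono fun s hs => by
    obtain ⟨hsS, hcl, ht⟩ := mem_cliquesBelow.1 hs
    exact mem_cliquesBelow.2 ⟨hsS, hcl, fun p hp => h.trans (ht p hp)⟩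

theorem cliqueNumBelow_leaf_le_one (v : T.Leaf) : cliqueNumBelow R S v.1 ≤ 1 :=
  Finset.sup_le fun s hs => card_le_one.2 fun a ha b hb => by
    have ht := (mem_cliquesBelow.1 hs).2.2
    exact Subtype.ext ((v.2.eq_of_ancestor (ht a ha)).trans (v.2.eq_of_ancestor (ht b hb)).symm)

theorem one_le_cliqueNumBelow {v : T.Leaf} {t : α} (hv : v ∈ S) (ht : T.Ancestor t v.1) :
    1 ≤ cliqueNumBelow R S t :=
  card_le_cliqueNumBelow (s := {v}) (by simpa using hv) (by simp) (by simpa using ht)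

theorem cliqueNumBelow_filter_root_le (c : α) :
    cliqueNumBelow R (S.filter fun v => T.Ancestor c v.1) T.root ≤ cliqueNumBelow R S c :=
  Finset.sup_le fun s hs => by
    obtain ⟨hsS, hcl, -⟩ := mem_cliquesBelow.1 hs
    exact card_le_cliqueNumBelow (fun p hp => (mem_filter.1 (hsS hp)).1) hcl
      fun p hp => (mem_filter.1 (hsS hp)).2

theorem cliqueNumBelow_le_cliqueNum [Fintype α] (t : α) :
    cliqueNumBelow R S t ≤ R.cliqueNum := by
  obtain ⟨s, -, hcl, -, hcard⟩ := exists_isClique_card_eq_cliqueNumBelow R S t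
  exact hcard ▸ hcl.card_le_cliqueNum

theorem IsRealization.adj_of_isChild (hR : IsRealization T g R) {z a b : α}
    (hadj : (g z).Adj a b) (ha : T.IsChild a z) (hb : T.IsChild b z) {p q : T.Leaf}
    (hp : T.Ancestor a p.1) (hq : T.Ancestor b q.1) : R.Adj p q :=
  (hR p q).2 ⟨z, a, b, isLCA_of_isChild ha hb hadj.ne hp hq, ha, hb, hp, hq, hadj⟩

/-- Cliques below pairwise adjacent children of `z` are complete to each other in `R`. -/
theorem IsRealization.sum_cliqueNumBelow_le (hR : IsRealization T g R) {z : α} (A : Finset α)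
    (hA : ∀ a ∈ A, T.IsChild a z) (hadj : (A : Set α).Pairwise (g z).Adj) :
    ∑ a ∈ A, cliqueNumBelow R S a ≤ cliqueNumBelow R S z := by
  choose K hKS hKcl hKt hKcard using exists_isClique_card_eq_cliqueNumBelow R S
  have hdisj : (A : Set α).PairwiseDisjoint K := fun a ha b hb hab =>
    disjoint_left.2 fun p hpa hpb =>
      hab ((hA a ha).eq_of_ancestor_of_ancestor (hA b hb) (hKt a p hpa) (hKt b p hpb))
  have hcl : R.IsClique ((A.biUnion K : Finset T.Leaf) : Set T.Leaf) := by
    intro p hp q hq hpq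
    obtain ⟨a, ha, hpa⟩ := mem_biUnion.1 hp
    obtain ⟨b, hb, hqb⟩ := mem_biUnion.1 hq
    by_cases hab : a = b
    · subst hab
      exact hKcl a hpa hqb hpq
    · exact hR.adj_of_isChild (hadj ha hb hab) (hA a ha) (hA b hb) (hKt a p hpa) (hKt b q hqb)
  calc ∑ a ∈ A, cliqueNumBelow R S a = #(A.biUnion K) := by
        rw [card_biUnion hdisj]
        exact sum_congr rfl fun a _ => (hKcard a).symm
    _ ≤ cliqueNumBelow R S z :=
        card_le_cliqueNumBelow (biUnion_subset.2 fun a _ => hKS a) hcl fun p hp => by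
          obtain ⟨a, ha, hpa⟩ := mem_biUnion.1 hp
          exact (hA a ha).ancestor.trans (hKt a p hpa)

theorem IsRealization.cliqueNumBelow_add_le (hR : IsRealization T g R) {z a b : α}
    (hadj : (g z).Adj a b) (ha : T.IsChild a z) (hb : T.IsChild b z) :
    cliqueNumBelow R S a + cliqueNumBelow R S b ≤ cliqueNumBelow R S z := by
  have h := hR.sum_cliqueNumBelow_le (S := S) (z := z) {a, b} (by simp [ha, hb])
    (by simpa [Set.pairwise_insert, hadj.ne] using ⟨hadj, hadj.symm⟩)
  rwa [sum_pair hadj.ne] at h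

theorem IsRealization.cliqueNumBelow_le_half_of_adj (hR : IsRealization T g R)
    {W : ℕ} (hS : cliqueNumBelow R S T.root ≤ W) {z x y : α} (hxy : (g z).Adj x y)
    (hxz : T.IsChild x z) (hyz : T.IsChild y z) (hx : W / 2 < cliqueNumBelow R S x) :
    cliqueNumBelow R S y ≤ W / 2 := by
  have := hR.cliqueNumBelow_add_le (S := S) hxy hxz hyz
  have := cliqueNumBelow_le_of_ancestor (R := R) (S := S) (root_ancestor z)
  omega

theorem isColoringOn_zero_of_lt_two {S : Finset T.Leaf} {W : ℕ}
    (hS : cliqueNumBelow R S T.root ≤ W) (hW : W < 2) (n : ℕ) :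
    IsColoringOn R S (W ^ n) 0 := by
  refine ⟨fun v hv => ?_, fun u hu v hv hadj _ => ?_⟩
  · have := one_le_cliqueNumBelow (R := R) hv (root_ancestor v.1)
    obtain rfl : W = 1 := by omega
    simp
  · have := card_le_cliqueNumBelow (R := R) (S := S) (t := T.root) (s := {u, v})
      (by simp [insert_subset_iff, hu, hv])
      (by rw [coe_pair, SimpleGraph.isClique_pair]; exact fun _ => hadj)
      (by simp [root_ancestor])
    rw [card_pair hadj.ne] at this
    omega

end CliqueNumBelow

section MaximalLight

variable {α : Type u} {T : ParentTree α} {R : SimpleGraph T.Leaf} {S : Finset T.Leaf} {W : ℕ}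

def IsMaximalLight (R : SimpleGraph T.Leaf) (S : Finset T.Leaf) (W : ℕ) (c : α) : Prop :=
  0 < cliqueNumBelow R S c ∧ cliqueNumBelow R S c ≤ W / 2 ∧
    W / 2 < cliqueNumBelow R S (T.parent c)

theorem IsMaximalLight.isChild_parent {c : α} (hc : IsMaximalLight R S W c) :
    T.IsChild c (T.parent c) :=
  ⟨rfl, fun h => by
    have := congrArg (cliqueNumBelow R S) h
    have := hc.2.1
    have := hc.2.2
    omega⟩

theorem IsMaximalLight.eq_of_ancestor {c c' t : α} (hc : IsMaximalLight R S W c)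
    (hc' : IsMaximalLight R S W c') (ht : T.Ancestor c t) (ht' : T.Ancestor c' t) : c = c' := by
  rcases ancestor_trichotomy ht ht' with h | h | h
  · exact h
  · have := cliqueNumBelow_le_of_ancestor (R := R) (S := S) h
    have := hc.2.1
    have := hc'.2.2
    omega
  · have := cliqueNumBelow_le_of_ancestor (R := R) (S := S) h
    have := hc'.2.1
    have := hc.2.2
    omega

theorem exists_isMaximalLight_ancestor (hW : 2 ≤ W) (hroot : W / 2 < cliqueNumBelow R S T.root)
    {v : T.Leaf} (hv : v ∈ S) : ∃ c, IsMaximalLight R S W c ∧ T.Ancestor c v.1 := by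
  have hex : ∃ n, W / 2 < cliqueNumBelow R S (T.parent^[n] v.1) := by
    obtain ⟨m, hm⟩ := T.reaches_root v.1
    exact ⟨m, by rwa [hm]⟩
  set n := Nat.find hex
  have hn : n ≠ 0 := by
    intro h0
    have := Nat.find_spec hex
    rw [show Nat.find hex = 0 from h0, Function.iterate_zero_apply] at this
    have := cliqueNumBelow_leaf_le_one (R := R) (S := S) v
    omega
  have hanc : T.Ancestor (T.parent^[n - 1] v.1) v.1 := ⟨_, rfl⟩
  refine ⟨T.parent^[n - 1] v.1, ⟨one_le_cliqueNumBelow hv hanc, ?_, ?_⟩, hanc⟩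
  · exact not_lt.1 (Nat.find_min hex (Nat.sub_lt (Nat.pos_of_ne_zero hn) one_pos))
  · rw [← Function.iterate_succ_apply' T.parent, Nat.succ_eq_add_one,
      Nat.sub_add_cancel (Nat.pos_of_ne_zero hn)]
    exact Nat.find_spec hex

noncomputable def maxLightAncestor (R : SimpleGraph T.Leaf) (S : Finset T.Leaf) (W : ℕ)
    (v : T.Leaf) : α :=
  if h : ∃ c, IsMaximalLight R S W c ∧ T.Ancestor c v.1 then h.choose else v.1

theorem maxLightAncestor_spec {v : T.Leaf} (h : ∃ c, IsMaximalLight R S W c ∧ T.Ancestor c v.1) :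
    IsMaximalLight R S W (maxLightAncestor R S W v) ∧
      T.Ancestor (maxLightAncestor R S W v) v.1 := by
  rw [maxLightAncestor, dif_pos h]
  exact h.choose_spec

def lightClass (R : SimpleGraph T.Leaf) (S : Finset T.Leaf) (W j : ℕ) : Set α :=
  {c | IsMaximalLight R S W c ∧ Nat.log 2 (cliqueNumBelow R S c) = j}

theorem two_pow_le_of_mem_lightClass {c : α} {j : ℕ} (hc : c ∈ lightClass R S W j) :
    2 ^ j ≤ cliqueNumBelow R S c :=
  hc.2 ▸ Nat.pow_log_le_self 2 hc.1.1.ne'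

theorem cliqueNumBelow_le_classCliqueBound {c : α} {j : ℕ} (hc : c ∈ lightClass R S W j) :
    cliqueNumBelow R S c ≤ classCliqueBound W j :=
  le_min (hc.2 ▸ (Nat.lt_pow_succ_log_self one_lt_two _).le) hc.1.2.1

end MaximalLight

section ChildColoring

variable {α : Type u} [Fintype α] {T : ParentTree α} {g : α → SimpleGraph α}
  {R : SimpleGraph T.Leaf} {k : ℕ} {C : ∀ β : Type u, SimpleGraph β → Prop}

theorem exists_coloring_children
    (hhered : ∀ (β : Type u) (G : SimpleGraph β) (s : Set β), C β G → C s (G.induce s))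
    (hchi : ∀ (β : Type u) [Fintype β] (H : SimpleGraph β), C β H →
      H.Colorable (H.cliqueNum ^ k))
    (hmem : ∀ x : α, ¬ T.IsLeaf x →
      C {y : α // T.IsChild y x} ((g x).induce {y : α | T.IsChild y x}))
    (z : α) (A : Set α) (N : ℕ)
    (hN : ∀ B : Finset α, (∀ b ∈ B, b ∈ A ∧ T.IsChild b z) → (B : Set α).Pairwise (g z).Adj →
      #B ≤ N) :
    ∃ κ : α → ℕ, (∀ a ∈ A, T.IsChild a z → κ a < N ^ k) ∧
      ∀ a ∈ A, ∀ b ∈ A, T.IsChild a z → T.IsChild b z → (g z).Adj a b → κ a ≠ κ b := by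
  by_cases hz : T.IsLeaf z
  · exact ⟨0, fun a _ ha => absurd ha (hz a), fun a _ _ _ ha => absurd ha (hz a)⟩
  set H := ((g z).induce {y : α | T.IsChild y z}).induce {y | y.1 ∈ A}
  have hH : H.cliqueNum ≤ N := by
    obtain ⟨s, hs⟩ := H.exists_isNClique_cliqueNum
    let e : {y : {y : α // T.IsChild y z} // y.1 ∈ A} ↪ α :=
      ⟨fun y => y.1.1, fun a b h => Subtype.ext (Subtype.ext h)⟩
    rw [← hs.card_eq, ← card_map e]
    refine hN _ (fun b hb => ?_) ?_
    · obtain ⟨y, -, rfl⟩ := mem_map.1 hb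
      exact ⟨y.2, y.1.2⟩
    · rw [coe_map]
      rintro _ ⟨a, ha, rfl⟩ _ ⟨b, hb, rfl⟩ hab
      exact hs.isClique ha hb fun h => hab (congrArg e h)
  obtain ⟨col⟩ := (hchi _ H (hhered _ _ _ (hmem z hz))).mono (Nat.pow_le_pow_left hH k)
  refine ⟨fun a => if h : T.IsChild a z ∧ a ∈ A then col ⟨⟨a, h.1⟩, h.2⟩ else 0, ?_, ?_⟩
  · intro a ha haz
    dsimp only
    rw [dif_pos ⟨haz, ha⟩]
    exact (col _).isLt
  · intro a ha b hb haz hbz hadj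
    dsimp only
    rw [dif_pos ⟨haz, ha⟩, dif_pos ⟨hbz, hb⟩]
    exact fun h => col.valid (show H.Adj ⟨⟨a, haz⟩, ha⟩ ⟨⟨b, hbz⟩, hb⟩ from hadj) (Fin.ext h)

theorem IsRealization.exists_coloring_lightClass (hR : IsRealization T g R)
    (hhered : ∀ (β : Type u) (G : SimpleGraph β) (s : Set β), C β G → C s (G.induce s))
    (hchi : ∀ (β : Type u) [Fintype β] (H : SimpleGraph β), C β H →
      H.Colorable (H.cliqueNum ^ k))
    (hmem : ∀ x : α, ¬ T.IsLeaf x →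
      C {y : α // T.IsChild y x} ((g x).induce {y : α | T.IsChild y x}))
    {S : Finset T.Leaf} {W : ℕ} (hS : cliqueNumBelow R S T.root ≤ W) (z : α) (j : ℕ) :
    ∃ κ : α → ℕ, (∀ a ∈ lightClass R S W j, T.IsChild a z → κ a < classColors k W j) ∧
      ∀ a ∈ lightClass R S W j, ∀ b ∈ lightClass R S W j, T.IsChild a z → T.IsChild b z →
        (g z).Adj a b → κ a ≠ κ b := by
  refine exists_coloring_children hhered hchi hmem z _ (W / 2 ^ j) fun B hB hadj => ?_
  rw [Nat.le_div_iff_mul_le (by positivity)]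
  calc #B * 2 ^ j = ∑ _b ∈ B, 2 ^ j := by rw [sum_const, smul_eq_mul]
    _ ≤ ∑ b ∈ B, cliqueNumBelow R S b :=
        sum_le_sum fun b hb => two_pow_le_of_mem_lightClass (hB b hb).1
    _ ≤ cliqueNumBelow R S z := hR.sum_cliqueNumBelow_le B (fun b hb => (hB b hb).2) hadj
    _ ≤ W := (cliqueNumBelow_le_of_ancestor (root_ancestor z)).trans hS

end ChildColoring

section PathOffset

variable {α : Type u} [Fintype α] (T : ParentTree α) (g : α → SimpleGraph α) (A : Set α)
  (w : α → ℕ)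

noncomputable def pathWeight (z x : α) : ℕ :=
  (univ.filter fun a => a ∈ A ∧ T.IsChild a z ∧ (g z).Adj a x).sup w

noncomputable def pathOffset (t : α) : ℕ :=
  ∑ s ∈ univ.filter (fun s => T.Ancestor s t ∧ s ≠ T.root), pathWeight T g A w (T.parent s) s

variable {T g A w}

theorem le_pathWeight {z x a : α} (ha : a ∈ A) (haz : T.IsChild a z) (hadj : (g z).Adj a x) :
    w a ≤ pathWeight T g A w z x :=
  le_sup (f := w) (mem_filter.2 ⟨mem_univ a, ha, haz, hadj⟩)

theorem pathOffset_root : pathOffset T g A w T.root = 0 :=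
  sum_eq_zero fun _ hs =>
    absurd (eq_root_of_ancestor_root (mem_filter.1 hs).2.1) (mem_filter.1 hs).2.2

theorem pathOffset_eq {t : α} (ht : t ≠ T.root) :
    pathOffset T g A w t = pathWeight T g A w (T.parent t) t + pathOffset T g A w (T.parent t) := by
  have hpath : univ.filter (fun s => T.Ancestor s t ∧ s ≠ T.root) =
      insert t (univ.filter fun s => T.Ancestor s (T.parent t) ∧ s ≠ T.root) := by
    ext s
    simp only [mem_filter, mem_univ, true_and, mem_insert]
    rw [ancestor_iff_eq_or_ancestor_parent]
    constructor
    · rintro ⟨h | h, hs⟩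
      exacts [Or.inl h, Or.inr ⟨h, hs⟩]
    · rintro (rfl | ⟨h, hs⟩)
      exacts [⟨Or.inl rfl, ht⟩, ⟨Or.inr h, hs⟩]
  have hnot : t ∉ univ.filter fun s => T.Ancestor s (T.parent t) ∧ s ≠ T.root := fun h =>
    (isChild_parent ht).2 ((mem_filter.1 h).2.1.antisymm (ancestor_parent t))
  rw [pathOffset, hpath, sum_insert hnot]
  rfl

theorem pathOffset_mono {a t : α} (h : T.Ancestor a t) :
    pathOffset T g A w a ≤ pathOffset T g A w t :=
  sum_le_sum_of_subset fun s hs => by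
    simp only [mem_filter, mem_univ, true_and] at hs ⊢
    exact ⟨hs.1.trans h, hs.2⟩

variable {R : SimpleGraph T.Leaf} {S : Finset T.Leaf} {L : ℕ}

theorem IsRealization.pathWeight_add_le (hR : IsRealization T g R)
    (hw : ∀ a ∈ A, w a ≤ L * cliqueNumBelow R S a) {t : α} (ht : t ≠ T.root) :
    pathWeight T g A w (T.parent t) t + L * cliqueNumBelow R S t ≤
      L * cliqueNumBelow R S (T.parent t) := by
  have hmono : L * cliqueNumBelow R S t ≤ L * cliqueNumBelow R S (T.parent t) :=
    Nat.mul_le_mul_left L (cliqueNumBelow_le_of_ancestor (ancestor_parent t))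
  suffices pathWeight T g A w (T.parent t) t ≤
      L * cliqueNumBelow R S (T.parent t) - L * cliqueNumBelow R S t by omega
  refine Finset.sup_le fun a ha => ?_
  obtain ⟨-, haA, hat, hadj⟩ := mem_filter.1 ha
  have := Nat.mul_le_mul_left L (hR.cliqueNumBelow_add_le (S := S) hadj hat (isChild_parent ht))
  rw [mul_add] at this
  have := hw a haA
  omega

/-- The modules adjacent to the path from `t` to the root, together with a clique below `t`,
form a clique of `R`. -/
theorem IsRealization.pathOffset_add_le (hR : IsRealization T g R)
    (hw : ∀ a ∈ A, w a ≤ L * cliqueNumBelow R S a) (t : α) :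
    pathOffset T g A w t + L * cliqueNumBelow R S t ≤ L * cliqueNumBelow R S T.root := by
  induction t using ParentTree.parent_induction with
  | root => rw [pathOffset_root, zero_add]
  | step t ht ih =>
    have := hR.pathWeight_add_le hw ht
    rw [pathOffset_eq ht]
    omega

end PathOffset

section Step

variable {α : Type u} [Fintype α] {T : ParentTree α} {g : α → SimpleGraph α}
  {R : SimpleGraph T.Leaf} {S : Finset T.Leaf} {W k : ℕ}

variable (g R S W k) in
noncomputable def classOffset (j : ℕ) (t : α) : ℕ :=
  pathOffset T g (lightClass R S W j) (fun a => cliqueNumBelow R S a ^ (2 * k + 3)) t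

theorem IsRealization.classOffset_parent_add_le (hR : IsRealization T g R)
    (hS : cliqueNumBelow R S T.root ≤ W) {c : α} {j : ℕ} (hc : c ∈ lightClass R S W j) :
    classOffset g R S W k j (T.parent c) + cliqueNumBelow R S c ^ (2 * k + 3) ≤
      classWidth k W j := by
  set L := classCliqueBound W j ^ (2 * k + 2)
  have hw : ∀ a ∈ lightClass R S W j,
      cliqueNumBelow R S a ^ (2 * k + 3) ≤ L * cliqueNumBelow R S a := fun a ha =>
    calc cliqueNumBelow R S a ^ (2 * k + 3)
        = cliqueNumBelow R S a ^ (2 * k + 2) * cliqueNumBelow R S a := by ring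
      _ ≤ L * cliqueNumBelow R S a :=
        Nat.mul_le_mul_right _ (Nat.pow_le_pow_left (cliqueNumBelow_le_classCliqueBound ha) _)
  have hpath := hR.pathOffset_add_le hw (T.parent c)
  have hparent : L * cliqueNumBelow R S c ≤ L * cliqueNumBelow R S (T.parent c) :=
    Nat.mul_le_mul_left _ (hc.1.2.1.trans hc.1.2.2.le)
  have hroot : L * cliqueNumBelow R S T.root ≤ L * W := Nat.mul_le_mul_left _ hS
  have := hw c hc
  change _ ≤ L * W
  unfold classOffset
  omega

theorem classOffset_add_lt {j n : ℕ} {c c' y z : α} (hc : c ∈ lightClass R S W j)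
    (hcz : T.IsChild c z) (hyz : T.IsChild y z) (hadj : (g z).Adj c y)
    (hy : T.Ancestor y (T.parent c')) (hn : n < cliqueNumBelow R S c ^ (2 * k + 3)) :
    classOffset g R S W k j z + n < classOffset g R S W k j (T.parent c') := by
  have hweight := le_pathWeight (w := fun a => cliqueNumBelow R S a ^ (2 * k + 3)) hc hcz hadj
  have hstep := pathOffset_eq (g := g) (A := lightClass R S W j)
    (w := fun a => cliqueNumBelow R S a ^ (2 * k + 3)) hyz.ne_root
  have hmono := pathOffset_mono (g := g) (A := lightClass R S W j)
    (w := fun a => cliqueNumBelow R S a ^ (2 * k + 3)) hy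
  rw [hyz.1] at hstep
  unfold classOffset
  omega

variable (g R S W k) in
noncomputable def stepColor (κ : α → ℕ → α → ℕ) (F : α → T.Leaf → ℕ) (v : T.Leaf) : ℕ :=
  let c := maxLightAncestor R S W v
  let j := Nat.log 2 (cliqueNumBelow R S c)
  blockEncode (classColors k W) (classWidth k W) j (κ (T.parent c) j c)
    (classOffset g R S W k j (T.parent c) + F c v)

variable {κ : α → ℕ → α → ℕ} {F : α → T.Leaf → ℕ}

theorem IsRealization.stepColor_digits_lt (hR : IsRealization T g R)
    (hS : cliqueNumBelow R S T.root ≤ W)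
    (hκ : ∀ z j, ∀ a ∈ lightClass R S W j, T.IsChild a z → κ z j a < classColors k W j)
    (hF : ∀ c, IsMaximalLight R S W c → IsColoringOn R (S.filter fun v => T.Ancestor c v.1)
      (cliqueNumBelow R S c ^ (2 * k + 3)) (F c))
    {v : T.Leaf} (hv : v ∈ S) {c : α} (hc : IsMaximalLight R S W c) (hcv : T.Ancestor c v.1) :
    κ (T.parent c) (Nat.log 2 (cliqueNumBelow R S c)) c <
        classColors k W (Nat.log 2 (cliqueNumBelow R S c)) ∧
      classOffset g R S W k (Nat.log 2 (cliqueNumBelow R S c)) (T.parent c) + F c v <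
        classWidth k W (Nat.log 2 (cliqueNumBelow R S c)) := by
  refine ⟨hκ _ _ c ⟨hc, rfl⟩ hc.isChild_parent, ?_⟩
  have := hR.classOffset_parent_add_le (k := k) hS (⟨hc, rfl⟩ : c ∈ lightClass R S W _)
  have := (hF c hc).1 v (mem_filter.2 ⟨hv, hcv⟩)
  omega

theorem IsRealization.stepColor_lt (hR : IsRealization T g R)
    (hS : cliqueNumBelow R S T.root ≤ W) (hW : 2 ≤ W)
    (hroot : W / 2 < cliqueNumBelow R S T.root)
    (hκ : ∀ z j, ∀ a ∈ lightClass R S W j, T.IsChild a z → κ z j a < classColors k W j)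
    (hF : ∀ c, IsMaximalLight R S W c → IsColoringOn R (S.filter fun v => T.Ancestor c v.1)
      (cliqueNumBelow R S c ^ (2 * k + 3)) (F c))
    {v : T.Leaf} (hv : v ∈ S) : stepColor g R S W k κ F v < W ^ (2 * k + 3) := by
  obtain ⟨hc, hcv⟩ := maxLightAncestor_spec (exists_isMaximalLight_ancestor hW hroot hv)
  obtain ⟨hκv, hrv⟩ := hR.stepColor_digits_lt hS hκ hF hv hc hcv
  exact (blockEncode_lt hκv hrv).trans_le <| blockStart_classes_le <|
    (two_pow_le_of_mem_lightClass (⟨hc, rfl⟩ : _ ∈ lightClass R S W _)).trans hc.2.1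

theorem IsRealization.stepColor_ne (hR : IsRealization T g R)
    (hS : cliqueNumBelow R S T.root ≤ W) (hW : 2 ≤ W)
    (hroot : W / 2 < cliqueNumBelow R S T.root)
    (hκ : ∀ z j, (∀ a ∈ lightClass R S W j, T.IsChild a z → κ z j a < classColors k W j) ∧
      ∀ a ∈ lightClass R S W j, ∀ b ∈ lightClass R S W j, T.IsChild a z → T.IsChild b z →
        (g z).Adj a b → κ z j a ≠ κ z j b)
    (hF : ∀ c, IsMaximalLight R S W c → IsColoringOn R (S.filter fun v => T.Ancestor c v.1)
      (cliqueNumBelow R S c ^ (2 * k + 3)) (F c))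
    {u v : T.Leaf} (hu : u ∈ S) (hv : v ∈ S) (hadj : R.Adj u v) :
    stepColor g R S W k κ F u ≠ stepColor g R S W k κ F v := by
  obtain ⟨hcu, hcuu⟩ := maxLightAncestor_spec (exists_isMaximalLight_ancestor hW hroot hu)
  obtain ⟨hcv, hcvv⟩ := maxLightAncestor_spec (exists_isMaximalLight_ancestor hW hroot hv)
  obtain ⟨hκu, hru⟩ := hR.stepColor_digits_lt hS (fun z j => (hκ z j).1) hF hu hcu hcuu
  obtain ⟨hκv, hrv⟩ := hR.stepColor_digits_lt hS (fun z j => (hκ z j).1) hF hv hcv hcvv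
  intro heq
  obtain ⟨hj, hκeq, hreq⟩ := blockEncode_inj hκu hru hκv hrv heq
  clear heq hκu hru hκv hrv
  generalize maxLightAncestor R S W u = cu at *
  generalize maxLightAncestor R S W v = cv at *
  have hFu := (hF cu hcu).1 u (mem_filter.2 ⟨hu, hcuu⟩)
  have hFv := (hF cv hcv).1 v (mem_filter.2 ⟨hv, hcvv⟩)
  by_cases hcc : cu = cv
  · subst hcc
    exact (hF cu hcu).2 u (mem_filter.2 ⟨hu, hcuu⟩) v (mem_filter.2 ⟨hv, hcvv⟩) hadj
      (Nat.add_left_cancel hreq)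
  obtain ⟨z, x, y, -, hxz, hyz, hxu, hyv, hxy⟩ := (hR u v).1 hadj
  have hx := (hxz.eq_or_ancestor_parent_or_ancestor hxu hcuu (hyz.ancestor.trans hyv)).imp_right
    (Or.resolve_right · fun h => hcc (hcu.eq_of_ancestor hcv h hcvv))
  have hy := (hyz.eq_or_ancestor_parent_or_ancestor hyv hcvv (hxz.ancestor.trans hxu)).imp_right
    (Or.resolve_right · fun h => hcc (hcv.eq_of_ancestor hcu h hcuu).symm)
  rcases hx with rfl | hx <;> rcases hy with rfl | hy
  · rw [hxz.1, hyz.1, ← hj] at hκeq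
    exact (hκ z _).2 _ ⟨hcu, rfl⟩ _ ⟨hcv, hj.symm⟩ hxz hyz hxy hκeq
  · have := classOffset_add_lt (k := k) (⟨hcu, rfl⟩ : x ∈ lightClass R S W _) hxz hyz hxy hy hFu
    rw [hxz.1, hj] at hreq
    rw [hj] at this
    omega
  · have := classOffset_add_lt (k := k) (⟨hcv, rfl⟩ : y ∈ lightClass R S W _) hyz hxz hxy.symm
      hx hFv
    rw [hyz.1, ← hj] at hreq
    rw [← hj] at this
    omega
  · have hxW := hcu.2.2.trans_le (cliqueNumBelow_le_of_ancestor hx)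
    have hyW := hcv.2.2.trans_le (cliqueNumBelow_le_of_ancestor hy)
    exact (hR.cliqueNumBelow_le_half_of_adj hS hxy hxz hyz hxW).not_gt hyW

end Step

section Induction

variable {α : Type u} [Fintype α] {T : ParentTree α} {g : α → SimpleGraph α}
  {R : SimpleGraph T.Leaf} {k : ℕ} {C : ∀ β : Type u, SimpleGraph β → Prop}

theorem IsRealization.exists_isColoringOn (hR : IsRealization T g R)
    (hhered : ∀ (β : Type u) (G : SimpleGraph β) (s : Set β), C β G → C s (G.induce s))
    (hchi : ∀ (β : Type u) [Fintype β] (H : SimpleGraph β), C β H →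
      H.Colorable (H.cliqueNum ^ k))
    (hmem : ∀ x : α, ¬ T.IsLeaf x →
      C {y : α // T.IsChild y x} ((g x).induce {y : α | T.IsChild y x}))
    (W : ℕ) (S : Finset T.Leaf) (hS : cliqueNumBelow R S T.root ≤ W) :
    ∃ f, IsColoringOn R S (W ^ (2 * k + 3)) f := by
  induction W using Nat.strong_induction_on generalizing S with
  | _ W ih =>
  by_cases hW : W < 2
  · exact ⟨0, isColoringOn_zero_of_lt_two hS hW _⟩
  by_cases hroot : W / 2 < cliqueNumBelow R S T.root
  · choose κ hκ using hR.exists_coloring_lightClass hhered hchi hmem hS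
    have hF : ∀ c, ∃ f, IsMaximalLight R S W c → IsColoringOn R
        (S.filter fun v => T.Ancestor c v.1) (cliqueNumBelow R S c ^ (2 * k + 3)) f := by
      intro c
      by_cases hc : IsMaximalLight R S W c
      · obtain ⟨f, hf⟩ :=
          ih _ (by have := hc.2.1; omega) _ (cliqueNumBelow_filter_root_le (S := S) c)
        exact ⟨f, fun _ => hf⟩
      · exact ⟨0, fun h => absurd h hc⟩
    choose F hF using hF
    exact ⟨stepColor g R S W k κ F,
      fun v hv => hR.stepColor_lt hS (by omega) hroot (fun z j => (hκ z j).1) hF hv,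
      fun u hu v hv => hR.stepColor_ne hS (by omega) hroot hκ hF hu hv⟩
  · obtain ⟨f, hf⟩ := ih (W / 2) (by omega) S (by omega)
    exact ⟨f, hf.mono (Nat.pow_le_pow_left (Nat.div_le_self W 2) _)⟩

end Induction

theorem substitution_closure_poly_chi_bounded_general {α : Type u} [Fintype α]
    (k : ℕ)
    (C : ∀ β : Type u, SimpleGraph β → Prop)
    (hhered : ∀ (β : Type u) (G : SimpleGraph β) (s : Set β),
      C β G → C s (G.induce s))
    (hchi : ∀ (β : Type u) [Fintype β] (H : SimpleGraph β), C β H →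
      H.Colorable (H.cliqueNum ^ k))
    (T : ParentTree α) (g : α → SimpleGraph α)
    (hmem : ∀ x : α, ¬ T.IsLeaf x →
      C {y : α // T.IsChild y x} ((g x).induce {y : α | T.IsChild y x}))
    (R : SimpleGraph {v : α // T.IsLeaf v}) (hR : IsRealization T g R) :
    R.Colorable (R.cliqueNum ^ (2 * k + 3)) := by
  obtain ⟨f, hf⟩ := hR.exists_isColoringOn hhered hchi hmem R.cliqueNum univ
    (cliqueNumBelow_le_cliqueNum T.root)
  exact hf.colorable

/-- If `C` is a hereditary (isomorphism-invariant and closed under induced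
subgraphs) class with χ-bounding function `ω^k` (`k ≥ 1`), then its
substitution closure `C_s` — the class of realizations of
`C`-tree-decompositions — is polynomially χ-bounded with function `ω^(2k+3)`. -/
theorem substitution_closure_poly_chi_bounded {α : Type u} [Fintype α]
    (k : ℕ) (hk : 1 ≤ k)
    (C : ∀ β : Type u, SimpleGraph β → Prop)
    (hiso : ∀ (β γ : Type u) (G : SimpleGraph β) (H : SimpleGraph γ),
      G ≃g H → C β G → C γ H)
    (hhered : ∀ (β : Type u) (G : SimpleGraph β) (s : Set β),
      C β G → C s (G.induce s))
    (hchi : ∀ (β : Type u) [Fintype β] (H : SimpleGraph β), C β H →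
      H.Colorable (H.cliqueNum ^ k))
    (T : ParentTree α) (g : α → SimpleGraph α)
    (hsupp : ∀ x y z, (g x).Adj y z → T.IsChild y x ∧ T.IsChild z x)
    (hmem : ∀ x : α, ¬ T.IsLeaf x →
      C {y : α // T.IsChild y x} ((g x).induce {y : α | T.IsChild y x}))
    (R : SimpleGraph {v : α // T.IsLeaf v}) (hR : IsRealization T g R) :
    R.Colorable (R.cliqueNum ^ (2 * k + 3)) :=
  substitution_closure_poly_chi_bounded_general k C hhered hchi T g hmem R hR
end
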